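/- In the upper half plane with hyperbolic area density 1/(4v²) du dv, the region B*₀ = {z = re^{iθ} : 0 < r < 1, arccos(r/(2r₁)) < θ < arccos(−r/(2r₋₁))} (the part of the unit half-disk at 0 lying outside the two circles |z − r₋₁| = r₋₁ and |z + r₁| = r₁) has finite hyperbolic area, bounded by C·(1/r₋₁ + 1/r₁) for a universal constant C, whenever r₋₁, r₁ ≥ 1. -/

import Mathlib

/-!
For `z = x + iy` with `0 ≤ arg z ≤ π`, the two conditions on `arg z` say that `z` lies outside the
circles `|z - r₁| = r₁` and `|z + r₋₁| = r₋₁`: `2 r₁ x < x² + y²` and `-(x² + y²) < 2 r₋₁ x`.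
Inside the unit disk and for `r₁ ≥ 1` the first gives `x < |z|/2`, hence `3x² < y²` and
`|z|² < 4y²/3`, so `x < 2y² / (3 r₁)`; symmetrically on the left. The region therefore sits in the
parabolic cusp `-a y² < x < b y²`, `0 < y < 1`, with `a = 2/(3 r₋₁)`, `b = 2/(3 r₁)`, whose
horizontal slices have length `(a + b) y²` and density `1/(4y²)`, so its hyperbolic area is
exactly `(a + b)/4`.
-/

open MeasureTheory Complex

open Real in
theorem Real.cos_lt_of_arccos_lt {t θ : ℝ} (hθ : θ ≤ π) (h : arccos t < θ) : cos θ < t := by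
  by_contra! hle
  have := arccos_le_arccos hle
  rw [arccos_cos ((arccos_nonneg t).trans h.le) hθ] at this
  linarith

open Real in
theorem Real.lt_cos_of_lt_arccos {t θ : ℝ} (hθ : 0 ≤ θ) (h : θ < arccos t) : t < cos θ := by
  by_contra! hle
  have := arccos_le_arccos hle
  rw [arccos_cos hθ (h.le.trans (arccos_le_pi t))] at this
  linarith

theorem setLIntegral_regionBetween {α : Type*} [MeasurableSpace α] {μ : Measure α} [SFinite μ]
    {f g : α → ℝ} {s : Set α} (hf : Measurable f) (hg : Measurable g) (hs : MeasurableSet s)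
    {h : α → ENNReal} (hh : Measurable h) :
    ∫⁻ p in regionBetween f g s, h p.1 ∂μ.prod volume =
      ∫⁻ x in s, h x * ENNReal.ofReal (g x - f x) ∂μ := by
  rw [← withDensity_apply _ (measurableSet_regionBetween hf hg hs), ← prod_withDensity_left hh,
    volume_regionBetween_eq_lintegral' hf hg hs,
    setLIntegral_withDensity_eq_setLIntegral_mul _ hh (by fun_prop) hs]
  rfl

theorem Complex.setLIntegral_im_regionBetween {f g : ℝ → ℝ} {s : Set ℝ} (hf : Measurable f)
    (hg : Measurable g) (hs : MeasurableSet s) {h : ℝ → ENNReal} (hh : Measurable h) :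
    ∫⁻ z in {z : ℂ | z.im ∈ s ∧ z.re ∈ Set.Ioo (f z.im) (g z.im)}, h z.im =
      ∫⁻ y in s, h y * ENNReal.ofReal (g y - f y) := by
  have e : MeasurePreserving (measurableEquivRealProd.trans MeasurableEquiv.prodComm)
      volume (volume.prod volume) := by
    have := volume_preserving_equiv_real_prod
    rw [Measure.volume_eq_prod] at this
    exact Measure.measurePreserving_swap.comp this
  rw [← setLIntegral_regionBetween hf hg hs hh]
  exact e.setLIntegral_comp_preimage_emb (MeasurableEquiv.measurableEmbedding _)
    (fun p => h p.1) (regionBetween f g s)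

def parabolicCusp (a b : ℝ) : Set ℂ :=
  {z : ℂ | z.im ∈ Set.Ioo 0 1 ∧ z.re ∈ Set.Ioo (-a * z.im ^ 2) (b * z.im ^ 2)}

theorem setLIntegral_parabolicCusp (a b : ℝ) :
    ∫⁻ z in parabolicCusp a b, ENNReal.ofReal (1 / (4 * z.im ^ 2)) =
      ENNReal.ofReal ((a + b) / 4) := by
  rw [parabolicCusp, Complex.setLIntegral_im_regionBetween (f := fun y => -a * y ^ 2)
    (g := fun y => b * y ^ 2) (h := fun y => ENNReal.ofReal (1 / (4 * y ^ 2))) (by fun_prop)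
    (by fun_prop) measurableSet_Ioo (by fun_prop)]
  calc ∫⁻ y in Set.Ioo (0 : ℝ) 1, ENNReal.ofReal (1 / (4 * y ^ 2)) *
        ENNReal.ofReal (b * y ^ 2 - -a * y ^ 2)
      = ∫⁻ y in Set.Ioo (0 : ℝ) 1, ENNReal.ofReal ((a + b) / 4) := by
        refine setLIntegral_congr_fun measurableSet_Ioo fun y hy => ?_
        rw [← ENNReal.ofReal_mul (by positivity)]
        congr 1
        field_simp [hy.1.ne']
        ring
    _ = ENNReal.ofReal ((a + b) / 4) := by simp

theorem Complex.two_mul_re_lt_sq_norm_of_arccos_lt_arg {z : ℂ} {c : ℝ} (hc : 0 < c)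
    (h : Real.arccos (‖z‖ / (2 * c)) < arg z) : 2 * c * z.re < ‖z‖ ^ 2 := by
  have hz : z ≠ 0 := by
    rintro rfl
    simp only [norm_zero, zero_div, Real.arccos_zero, arg_zero] at h
    linarith [Real.pi_pos]
  have := Real.cos_lt_of_arccos_lt (arg_le_pi z) h
  rw [cos_arg hz, div_lt_div_iff₀ (norm_pos_iff.2 hz) (by positivity)] at this
  linarith

theorem Complex.neg_sq_norm_lt_two_mul_re_of_arg_lt_arccos {z : ℂ} {c : ℝ} (hc : 0 < c)
    (him : 0 < z.im) (h : arg z < Real.arccos (-(‖z‖ / (2 * c)))) : -‖z‖ ^ 2 < 2 * c * z.re := by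
  have hz : z ≠ 0 := fun h0 => by simp [h0] at him
  have := Real.lt_cos_of_lt_arccos (arg_nonneg_iff.2 him.le) h
  rw [cos_arg hz, neg_lt, ← neg_div,
    div_lt_div_iff₀ (norm_pos_iff.2 hz) (by positivity)] at this
  linarith

theorem lt_mul_sq_of_two_mul_lt_sq_add_sq {x y c : ℝ} (hc : 1 ≤ c) (hr : x ^ 2 + y ^ 2 < 1)
    (h : 2 * c * x < x ^ 2 + y ^ 2) : x < 2 / (3 * c) * y ^ 2 := by
  rw [div_mul_eq_mul_div, lt_div_iff₀ (by positivity)]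
  rcases le_or_gt x 0 with hx | hx
  · nlinarith
  have h2x : 2 * x < x ^ 2 + y ^ 2 := by nlinarith
  have hx2 : 3 * x ^ 2 < y ^ 2 := by nlinarith
  nlinarith

def cuspRegion (rm1 r1 : ℝ) : Set ℂ :=
  {z : ℂ | 0 < ‖z‖ ∧ ‖z‖ < 1 ∧ 0 < z.im ∧
    Real.arccos (‖z‖ / (2 * r1)) < Complex.arg z ∧
    Complex.arg z < Real.arccos (-(‖z‖ / (2 * rm1)))}

theorem cuspRegion_subset_parabolicCusp {rm1 r1 : ℝ} (hm : 1 ≤ rm1) (h1 : 1 ≤ r1) :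
    cuspRegion rm1 r1 ⊆ parabolicCusp (2 / (3 * rm1)) (2 / (3 * r1)) := by
  rintro z ⟨-, hz1, him, harg1, harg2⟩
  have hn : ‖z‖ ^ 2 = z.re ^ 2 + z.im ^ 2 := by rw [Complex.sq_norm, normSq_apply]; ring
  have hz1' : z.re ^ 2 + z.im ^ 2 < 1 := hn ▸ pow_lt_one₀ (norm_nonneg z) hz1 two_ne_zero
  have hright := two_mul_re_lt_sq_norm_of_arccos_lt_arg (by linarith) harg1
  have hleft := neg_sq_norm_lt_two_mul_re_of_arg_lt_arccos (by linarith) him harg2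
  have hleft' := lt_mul_sq_of_two_mul_lt_sq_add_sq (x := -z.re) (y := z.im) hm (by rwa [neg_sq])
    (by rw [neg_sq, ← hn]; linarith)
  refine ⟨⟨him, (im_le_norm z).trans_lt hz1⟩, by linarith, ?_⟩
  exact lt_mul_sq_of_two_mul_lt_sq_add_sq h1 hz1' (hn ▸ hright)

/-- the region B*₀ = {re^{iθ} : 0 < r < 1,
arccos(r/(2r₁)) < θ < arccos(−r/(2r₋₁))} of the upper half plane has hyperbolic area
(density 1/(4v²)) bounded by C·(1/r₋₁ + 1/r₁) for a universal constant C,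
whenever r₋₁, r₁ ≥ 1. -/
theorem hyperbolic_area_cusp_region :
    ∃ C : ℝ, 0 < C ∧ ∀ rm1 r1 : ℝ, 1 ≤ rm1 → 1 ≤ r1 →
      (∫⁻ z in {z : ℂ | 0 < ‖z‖ ∧ ‖z‖ < 1 ∧ 0 < z.im ∧
            Real.arccos (‖z‖ / (2 * r1)) < Complex.arg z ∧
            Complex.arg z < Real.arccos (-(‖z‖ / (2 * rm1)))},
          ENNReal.ofReal (1 / (4 * z.im ^ 2)) ∂volume)
        ≤ ENNReal.ofReal (C * (1 / rm1 + 1 / r1)) := by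
  refine ⟨1 / 6, by norm_num, fun rm1 r1 hm h1 => ?_⟩
  calc ∫⁻ z in cuspRegion rm1 r1, ENNReal.ofReal (1 / (4 * z.im ^ 2))
      ≤ ∫⁻ z in parabolicCusp (2 / (3 * rm1)) (2 / (3 * r1)),
          ENNReal.ofReal (1 / (4 * z.im ^ 2)) :=
        lintegral_mono_set (cuspRegion_subset_parabolicCusp hm h1)
    _ = ENNReal.ofReal (1 / 6 * (1 / rm1 + 1 / r1)) := by
        rw [setLIntegral_parabolicCusp]
        congr 1
        ring
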